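/- Let K = (E, I, c, p, β) be a BMI instance, 0 < ε < 1/2, and let α satisfy OPT(K)/2 ≤ α ≤ OPT(K). Let G ∈ I_{≤q(ε)} and let Z_G ⊆ ⋃_{r∈[log_{1−ε}(ε/2)+1]} C_r(α) be a substitution of G. Then Z_G is a replacement of G; in particular, p((G \ H) ∪ Z_G) ≥ (1 − ε)·p(G) and |Z_G| ≤ |G ∩ H|. -/
import Mathlib


open Finset
open scoped Classical

/-- A budgeted matroid independent set (BMI) instance: a matroid `(E, Indep)` on a
finite ground set in which every singleton is independent, a budget `budget > 0`,
a cost function `cost : E → [0, budget]`, and a nonnegative profit function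
`profit`. -/
structure BMI (E : Type) [Fintype E] [DecidableEq E] where
  Indep : Finset E → Prop
  indep_empty : Indep ∅
  indep_subset : ∀ ⦃A B : Finset E⦄, Indep A → B ⊆ A → Indep B
  indep_exchange : ∀ ⦃A B : Finset E⦄, Indep A → Indep B → B.card < A.card →
    ∃ e ∈ A \ B, Indep (insert e B)
  indep_singleton : ∀ e : E, Indep {e}
  budget : ℝ
  budget_pos : 0 < budget
  cost : E → ℝ
  cost_nonneg : ∀ e, 0 ≤ cost e
  cost_le_budget : ∀ e, cost e ≤ budget
  profit : E → ℝ
  profit_nonneg : ∀ e, 0 ≤ profit e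

variable {E : Type} [Fintype E] [DecidableEq E]

/-- A solution of a BMI instance: an independent set of total cost at most the budget. -/
def BMI.IsSolution (K : BMI E) (X : Finset E) : Prop :=
  K.Indep X ∧ ∑ e ∈ X, K.cost e ≤ K.budget

/-- `OPT(K)`: the maximal profit of a solution of `K`. -/
noncomputable def BMI.opt (K : BMI E) : ℝ :=
  sSup {v : ℝ | ∃ X : Finset E, K.IsSolution X ∧ v = ∑ e ∈ X, K.profit e}

/-- `q(ε) = ε^{-1/ε}` (a real power). -/
noncomputable def qe (ε : ℝ) : ℝ := ε ^ (-(1/ε))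

/-- The set `H` of profitable elements: those with `p(e) > ε·OPT(K)`. -/
noncomputable def BMI.H (K : BMI E) (ε : ℝ) : Finset E :=
  univ.filter (fun e => ε * K.opt < K.profit e)

/-- `A ∈ I_{≤ q(ε)}`: `A` is independent and `|A| ≤ q(ε)`. -/
def BMI.IndepLe (K : BMI E) (ε : ℝ) (A : Finset E) : Prop :=
  K.Indep A ∧ (A.card : ℝ) ≤ qe ε

/-- The number of profit classes, `⌊log_{1-ε}(ε/2) + 1⌋`. -/
noncomputable def numClasses (ε : ℝ) : ℕ := ⌊Real.logb (1 - ε) (ε/2) + 1⌋₊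

/-- The `r`-th profit class
`C_r(α) = {e ∈ E : (1-ε)^r < p(e)/(2α) ≤ (1-ε)^{r-1}}`. -/
noncomputable def BMI.profitClass (K : BMI E) (ε α : ℝ) (r : ℕ) : Finset E :=
  univ.filter (fun e =>
    (1 - ε)^r < K.profit e / (2*α) ∧ K.profit e / (2*α) ≤ (1 - ε)^(r-1))

/-- Independent sets of the matroid `[(E, I) ∩ C_r(α)]_{≤ q(ε)}` on the ground set
`C_r(α)`: the sets `A ⊆ C_r(α)` with `A ∈ I` and `|A| ≤ q(ε)`. -/
noncomputable def BMI.classIndep (K : BMI E) (ε α : ℝ) (r : ℕ) (A : Finset E) : Prop :=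
  A ⊆ K.profitClass ε α r ∧ K.Indep A ∧ (A.card : ℝ) ≤ qe ε

/-- `B` is a basis of the independence system `Indep` on ground set `ground`:
an inclusion-maximal independent subset of the ground set. -/
def IsBasisOf (Indep : Finset E → Prop) (ground : Finset E) (B : Finset E) : Prop :=
  B ⊆ ground ∧ Indep B ∧ ∀ e ∈ ground, e ∉ B → ¬ Indep (insert e B)

/-- `B` is a minimum basis of `Indep` on `ground` with respect to weights `w`. -/
def IsMinBasisOf (Indep : Finset E → Prop) (ground : Finset E) (w : E → ℝ)
    (B : Finset E) : Prop :=
  IsBasisOf Indep ground B ∧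
    ∀ A : Finset E, IsBasisOf Indep ground A → ∑ e ∈ B, w e ≤ ∑ e ∈ A, w e

/-- `Z` is a substitution of `G` (Definition 4.7): `Z` is contained in the union of
the profit classes, `(G \ H) ∪ Z ∈ I_{≤ q(ε)}`, `c(Z) ≤ c(G ∩ H)`,
`|C_r(α) ∩ Z| = |C_r(α) ∩ G ∩ H|` for every class `r`, and `(G \ H) ∩ Z = ∅`. -/
noncomputable def BMI.IsSubstitution (K : BMI E) (ε α : ℝ) (G Z : Finset E) : Prop :=
  Z ⊆ (Finset.Icc 1 (numClasses ε)).biUnion (K.profitClass ε α) ∧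
  K.IndepLe ε ((G \ K.H ε) ∪ Z) ∧
  ∑ e ∈ Z, K.cost e ≤ ∑ e ∈ G ∩ K.H ε, K.cost e ∧
  (∀ r ∈ Finset.Icc 1 (numClasses ε),
    (K.profitClass ε α r ∩ Z).card = (K.profitClass ε α r ∩ G ∩ K.H ε).card) ∧
  (G \ K.H ε) ∩ Z = ∅

/-- `Z` is a replacement of `G` for `K` and `ε` (Definition 3.1). -/
noncomputable def BMI.IsReplacement (K : BMI E) (ε : ℝ) (G Z : Finset E) : Prop :=
  K.IndepLe ε ((G \ K.H ε) ∪ Z) ∧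
  ∑ e ∈ Z, K.cost e ≤ ∑ e ∈ G ∩ K.H ε, K.cost e ∧
  (1 - ε) * ∑ e ∈ G, K.profit e ≤ ∑ e ∈ (G \ K.H ε) ∪ Z, K.profit e ∧
  Z.card ≤ (G ∩ K.H ε).card

lemma BMI.bddAbove_profitSet (K : BMI E) :
    BddAbove {v : ℝ | ∃ X : Finset E, K.IsSolution X ∧ v = ∑ e ∈ X, K.profit e} := by
  have h : {v : ℝ | ∃ X : Finset E, K.IsSolution X ∧ v = ∑ e ∈ X, K.profit e} ⊆
      Set.range (fun X : Finset E => ∑ e ∈ X, K.profit e) := by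
    rintro v ⟨X, _, rfl⟩; exact ⟨X, rfl⟩
  exact ((Set.finite_range _).bddAbove).mono h

lemma BMI.opt_nonneg (K : BMI E) : 0 ≤ K.opt := by
  refine le_csSup K.bddAbove_profitSet ⟨∅, ⟨K.indep_empty, ?_⟩, by simp⟩
  simp [K.budget_pos.le]

lemma BMI.profit_le_opt (K : BMI E) (e : E) : K.profit e ≤ K.opt := by
  refine le_csSup K.bddAbove_profitSet ⟨{e}, ⟨K.indep_singleton e, ?_⟩, by simp⟩
  simp [K.cost_le_budget e]

lemma profitClass_disjoint (K : BMI E) {ε α : ℝ} (hε1 : 0 < ε) (hε2 : ε < 1)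
    {r s : ℕ} (hr : 1 ≤ r) (hs : 1 ≤ s) (hrs : r ≠ s) :
    Disjoint (K.profitClass ε α r) (K.profitClass ε α s) := by
  wlog h : r < s generalizing r s
  · exact (this hs hr hrs.symm (hrs.lt_or_gt.resolve_left h)).symm
  rw [Finset.disjoint_left]
  intro e he1 he2
  simp only [BMI.profitClass, mem_filter] at he1 he2
  have h1 : (1-ε)^(s-1) ≤ (1-ε)^r :=
    pow_le_pow_of_le_one (by linarith) (by linarith) (by omega)
  linarith [he1.2.1, he2.2.2]

lemma one_le_numClasses {ε : ℝ} (hε1 : 0 < ε) (hε2 : ε < 1/2) : 1 ≤ numClasses ε := by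
  have hlog : 0 ≤ Real.logb (1 - ε) (ε/2) := by
    rw [Real.logb, div_nonneg_iff]
    right
    constructor
    · exact (Real.log_nonpos_iff (by linarith)).mpr (by linarith)
    · exact (Real.log_nonpos_iff (by linarith)).mpr (by linarith)
  exact Nat.le_floor (by linarith)

lemma pow_numClasses_le {ε : ℝ} (hε1 : 0 < ε) (hε2 : ε < 1/2) :
    (1 - ε) ^ (numClasses ε) ≤ ε / 2 := by
  have hb0 : (0:ℝ) < 1 - ε := by linarith
  have hb1 : (1:ℝ) - ε < 1 := by linarith
  have hL : Real.logb (1 - ε) (ε/2) ≤ (numClasses ε : ℝ) := by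
    have := Nat.lt_floor_add_one (Real.logb (1 - ε) (ε/2) + 1)
    unfold numClasses
    linarith
  calc (1 - ε) ^ (numClasses ε) = (1 - ε) ^ ((numClasses ε : ℝ)) := by
        rw [Real.rpow_natCast]
    _ ≤ (1 - ε) ^ (Real.logb (1 - ε) (ε/2)) :=
        Real.rpow_le_rpow_of_exponent_ge hb0 hb1.le hL
    _ = ε / 2 := Real.rpow_logb hb0 (by linarith) (by linarith)

lemma mem_biUnion_profitClass (K : BMI E) {ε α : ℝ} (hε1 : 0 < ε) (hε2 : ε < 1/2)
    {e : E} (hlow : ε/2 < K.profit e / (2*α)) (hhigh : K.profit e / (2*α) ≤ 1) :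
    e ∈ (Finset.Icc 1 (numClasses ε)).biUnion (K.profitClass ε α) := by
  set x := K.profit e / (2*α) with hx
  have hn1 : 1 ≤ numClasses ε := one_le_numClasses hε1 hε2
  have hb0 : (0:ℝ) < 1 - ε := by linarith
  set S := (Finset.Icc 1 (numClasses ε)).filter (fun r => (1-ε)^r < x) with hS
  have hSne : S.Nonempty := by
    refine ⟨numClasses ε, mem_filter.mpr ⟨mem_Icc.mpr ⟨hn1, le_rfl⟩, ?_⟩⟩
    exact lt_of_le_of_lt (pow_numClasses_le hε1 hε2) hlow
  set r := S.min' hSne with hr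
  have hrS : r ∈ S := S.min'_mem hSne
  rw [hS, mem_filter, mem_Icc] at hrS
  refine mem_biUnion.mpr ⟨r, mem_Icc.mpr hrS.1, ?_⟩
  simp only [BMI.profitClass, mem_filter, mem_univ, true_and]
  refine ⟨hrS.2, ?_⟩
  by_contra hcon
  push_neg at hcon
  rcases eq_or_lt_of_le hrS.1.1 with h1 | h1
  · rw [← h1] at hcon; simp at hcon; linarith
  · have hmem : r - 1 ∈ S := by
      rw [hS, mem_filter, mem_Icc]
      exact ⟨⟨by omega, by omega⟩, hcon⟩
    have := S.min'_le _ hmem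
    rw [← hr] at this
    omega
/-- Every substitution `Z` of `G ∈ I_{≤ q(ε)}` is a replacement
of `G`; in particular `p((G \ H) ∪ Z) ≥ (1 - ε)·p(G)` and `|Z| ≤ |G ∩ H|`. -/
theorem substitution_is_replacement (K : BMI E) (ε : ℝ)
    (hε : 0 < ε) (hε2 : ε < 1/2) (α : ℝ) (hα1 : K.opt / 2 ≤ α) (hα2 : α ≤ K.opt)
    (G Z : Finset E) (hG : K.IndepLe ε G) (hZ : K.IsSubstitution ε α G Z) :
    K.IsReplacement ε G Z ∧
    (1 - ε) * ∑ e ∈ G, K.profit e ≤ ∑ e ∈ (G \ K.H ε) ∪ Z, K.profit e ∧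
    Z.card ≤ (G ∩ K.H ε).card := by
  obtain ⟨hZsub, hZind, hZcost, hZcount, hZdisj⟩ := hZ
  set N := Finset.Icc 1 (numClasses ε) with hN
  have hdisjC : ∀ r ∈ N, ∀ s ∈ N, r ≠ s →
      Disjoint (K.profitClass ε α r) (K.profitClass ε α s) := by
    intro r hr s hs hrs
    rw [hN, mem_Icc] at hr hs
    exact profitClass_disjoint K hε (by linarith) hr.1 hs.1 hrs
  -- Z is the disjoint union of its class pieces
  have hZeq : Z = N.biUnion (fun r => K.profitClass ε α r ∩ Z) := by
    ext e
    simp only [mem_biUnion, mem_inter]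
    constructor
    · intro he
      obtain ⟨r, hr, hre⟩ := mem_biUnion.mp (hZsub he)
      exact ⟨r, hr, hre, he⟩
    · rintro ⟨r, _, _, he⟩; exact he
  have hcardZ : Z.card = ∑ r ∈ N, (K.profitClass ε α r ∩ Z).card := by
    conv_lhs => rw [hZeq]
    exact Finset.card_biUnion (fun r hr s hs hrs =>
      (hdisjC r hr s hs hrs).mono inter_subset_left inter_subset_left)
  -- cardinality bound
  have hc : Z.card ≤ (G ∩ K.H ε).card := by
    have hsub : N.biUnion (fun r => K.profitClass ε α r ∩ G ∩ K.H ε) ⊆ G ∩ K.H ε := by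
      intro e he
      obtain ⟨r, _, he⟩ := mem_biUnion.mp he
      rw [mem_inter] at he ⊢
      exact ⟨(mem_inter.mp he.1).2, he.2⟩
    calc Z.card = ∑ r ∈ N, (K.profitClass ε α r ∩ Z).card := hcardZ
      _ = ∑ r ∈ N, (K.profitClass ε α r ∩ G ∩ K.H ε).card :=
          Finset.sum_congr rfl (fun r hr => hZcount r hr)
      _ = (N.biUnion (fun r => K.profitClass ε α r ∩ G ∩ K.H ε)).card :=
          (Finset.card_biUnion (fun r hr s hs hrs =>
            (hdisjC r hr s hs hrs).mono
              (inter_subset_left.trans inter_subset_left)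
              (inter_subset_left.trans inter_subset_left))).symm
      _ ≤ (G ∩ K.H ε).card := Finset.card_le_card hsub
  -- profit bound
  have hsplitG : ∑ e ∈ G ∩ K.H ε, K.profit e + ∑ e ∈ G \ K.H ε, K.profit e
      = ∑ e ∈ G, K.profit e := Finset.sum_inter_add_sum_sdiff G (K.H ε) K.profit
  have hsumUnion : ∑ e ∈ (G \ K.H ε) ∪ Z, K.profit e
      = ∑ e ∈ G \ K.H ε, K.profit e + ∑ e ∈ Z, K.profit e :=
    Finset.sum_union (Finset.disjoint_iff_inter_eq_empty.mpr hZdisj)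
  have hnnGH : 0 ≤ ∑ e ∈ G \ K.H ε, K.profit e :=
    Finset.sum_nonneg (fun e _ => K.profit_nonneg e)
  have hp : (1 - ε) * ∑ e ∈ G, K.profit e ≤ ∑ e ∈ (G \ K.H ε) ∪ Z, K.profit e := by
    by_cases hα0 : 0 < α
    case neg =>
      -- then OPT = 0, all profits vanish
      have hopt : K.opt = 0 := le_antisymm (by push_neg at hα0; linarith) K.opt_nonneg
      have hp0 : ∀ e : E, K.profit e = 0 := fun e =>
        le_antisymm (by have := K.profit_le_opt e; linarith) (K.profit_nonneg e)
      simp [hp0]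
    case pos =>
    have h2α : (0:ℝ) < 2 * α := by linarith
    -- G ∩ H is covered by the classes
    have hGHsub : ∀ e ∈ G ∩ K.H ε, e ∈ N.biUnion (K.profitClass ε α) := by
      intro e he
      have heH : ε * K.opt < K.profit e := by
        have := (mem_filter.mp (mem_inter.mp he).2).2
        exact this
      have hlow : ε/2 < K.profit e / (2*α) := by
        rw [lt_div_iff₀ h2α]
        nlinarith [mul_le_mul_of_nonneg_left hα2 hε.le]
      have hhigh : K.profit e / (2*α) ≤ 1 := by
        rw [div_le_one h2α]
        have := K.profit_le_opt e
        linarith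
      exact mem_biUnion_profitClass K hε hε2 hlow hhigh
    have hGHeq : G ∩ K.H ε = N.biUnion (fun r => K.profitClass ε α r ∩ G ∩ K.H ε) := by
      ext e
      simp only [mem_biUnion, mem_inter]
      constructor
      · intro he
        obtain ⟨r, hr, hre⟩ := mem_biUnion.mp (hGHsub e (mem_inter.mpr he))
        exact ⟨r, hr, ⟨hre, he.1⟩, he.2⟩
      · rintro ⟨r, _, ⟨_, h1⟩, h2⟩; exact ⟨h1, h2⟩
    have hpd : (Set.PairwiseDisjoint ↑N (fun r => K.profitClass ε α r ∩ G ∩ K.H ε)) :=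
      fun r hr s hs hrs => (hdisjC r (mem_coe.mp hr) s (mem_coe.mp hs) hrs).mono
        (inter_subset_left.trans inter_subset_left)
        (inter_subset_left.trans inter_subset_left)
    have hpdZ : (Set.PairwiseDisjoint ↑N (fun r => K.profitClass ε α r ∩ Z)) :=
      fun r hr s hs hrs => (hdisjC r (mem_coe.mp hr) s (mem_coe.mp hs) hrs).mono
        inter_subset_left inter_subset_left
    have hsumGH : ∑ e ∈ G ∩ K.H ε, K.profit e
        = ∑ r ∈ N, ∑ e ∈ K.profitClass ε α r ∩ G ∩ K.H ε, K.profit e := by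
      conv_lhs => rw [hGHeq]
      exact Finset.sum_biUnion hpd
    have hsumZ : ∑ e ∈ Z, K.profit e
        = ∑ r ∈ N, ∑ e ∈ K.profitClass ε α r ∩ Z, K.profit e := by
      conv_lhs => rw [hZeq]
      exact Finset.sum_biUnion hpdZ
    -- per-class comparison
    have hclass : ∀ r ∈ N, (1 - ε) * ∑ e ∈ K.profitClass ε α r ∩ G ∩ K.H ε, K.profit e
        ≤ ∑ e ∈ K.profitClass ε α r ∩ Z, K.profit e := by
      intro r hr
      have hr1 : 1 ≤ r := (mem_Icc.mp (by rwa [hN] at hr)).1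
      have hpow : (1 - ε) * (1 - ε)^(r-1) = (1 - ε)^r := by
        rw [← pow_succ']
        congr 1
        omega
      set n := (K.profitClass ε α r ∩ G ∩ K.H ε).card with hn'
      have hub : ∑ e ∈ K.profitClass ε α r ∩ G ∩ K.H ε, K.profit e
          ≤ n • ((1 - ε)^(r-1) * (2*α)) := by
        refine Finset.sum_le_card_nsmul _ _ _ (fun e he => ?_)
        have heC := mem_filter.mp (mem_inter.mp (mem_inter.mp he).1).1
        have := heC.2.2
        rw [div_le_iff₀ h2α] at this
        exact this
      have hlb : (K.profitClass ε α r ∩ Z).card • ((1 - ε)^r * (2*α))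
          ≤ ∑ e ∈ K.profitClass ε α r ∩ Z, K.profit e := by
        refine Finset.card_nsmul_le_sum _ _ _ (fun e he => ?_)
        have heC := mem_filter.mp (mem_inter.mp he).1
        have := heC.2.1
        rw [lt_div_iff₀ h2α] at this
        exact this.le
      rw [hZcount r hr, ← hn'] at hlb
      rw [nsmul_eq_mul] at hub hlb
      have hεnn : (0:ℝ) ≤ 1 - ε := by linarith
      calc (1 - ε) * ∑ e ∈ K.profitClass ε α r ∩ G ∩ K.H ε, K.profit e
          ≤ (1 - ε) * (n * ((1 - ε)^(r-1) * (2*α))) := by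
            exact mul_le_mul_of_nonneg_left hub hεnn
        _ = n * ((1 - ε)^r * (2*α)) := by rw [← hpow]; ring
        _ ≤ ∑ e ∈ K.profitClass ε α r ∩ Z, K.profit e := hlb
    have hkey : (1 - ε) * ∑ e ∈ G ∩ K.H ε, K.profit e ≤ ∑ e ∈ Z, K.profit e := by
      rw [hsumGH, hsumZ, Finset.mul_sum]
      exact Finset.sum_le_sum hclass
    rw [hsumUnion, ← hsplitG]
    nlinarith
  exact ⟨⟨hZind, hZcost, hp, hc⟩, hp, hc⟩
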